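/- arXiv:1008.2745 — 5 statements merged into one kernel-verified Lean document; each statement's English description precedes it below -/
import Mathlib

section
/- For every real number u with -1 < u < 1, the inequality arccos(u) ≥ π/2 - u - 36·|u|^(3/2) holds. -/
/-!
Since `arccos u = π/2 - arcsin u`, this is an upper bound on `arcsin`. For `u ≤ 0` it follows
from `arcsin u ≤ u`. For `0 < u ≤ 1/2`, the Taylor bound `sin y > y - y³/6` at `y = u + u³` gives
`arcsin u ≤ u + u³ ≤ u + 36 u^(3/2)`; for `u > 1/2` the right-hand side already exceeds `π/2`.
-/

open Real

namespace Real

theorem arcsin_le_self_of_nonpos {x : ℝ} (hx₁ : -1 ≤ x) (hx₀ : x ≤ 0) : arcsin x ≤ x := by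
  have hsin : x ≤ sin x := by simpa using sin_le (neg_nonneg.2 hx₀)
  refine (arcsin_le_iff_le_sin ⟨hx₁, hx₀.trans zero_le_one⟩ ⟨?_, ?_⟩).2 hsin <;>
    linarith [pi_gt_three]

theorem arcsin_le_add_pow_three {x : ℝ} (hx₀ : 0 ≤ x) (hx : x ≤ 1 / 2) :
    arcsin x ≤ x + x ^ 3 := by
  have hsq : x ^ 2 ≤ 1 / 4 := by nlinarith
  have hcube_le : x ^ 3 ≤ x / 4 := by nlinarith
  have hy₀ : 0 ≤ x + x ^ 3 := by positivity
  have hy₁ : x + x ^ 3 ≤ 1 := by linarith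
  -- `sin y > y - y³/6 ≥ x` for `y = x + x³`, because `y³ = x³ (1 + x²)³ ≤ 6 x³`.
  have hsin : x ≤ sin (x + x ^ 3) := by
    rcases hx₀.eq_or_lt with rfl | hpos
    · simp
    have hcube : (x + x ^ 3) ^ 3 ≤ 6 * x ^ 3 := by
      have : (1 + x ^ 2) ^ 3 ≤ 6 := by
        calc (1 + x ^ 2) ^ 3 ≤ (1 + 1 / 4) ^ 3 := by gcongr
          _ ≤ 6 := by norm_num
      calc (x + x ^ 3) ^ 3 = x ^ 3 * (1 + x ^ 2) ^ 3 := by ring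
        _ ≤ x ^ 3 * 6 := by gcongr
        _ = 6 * x ^ 3 := by ring
    linarith [sin_gt_sub_cube (show 0 < x + x ^ 3 by positivity)]
  refine (arcsin_le_iff_le_sin ⟨by linarith, by linarith⟩ ⟨?_, ?_⟩).2 hsin <;>
    linarith [pi_gt_three]

theorem pow_three_le_rpow_three_halves {x : ℝ} (hx₀ : 0 ≤ x) (hx₁ : x ≤ 1) :
    x ^ 3 ≤ x ^ ((3 : ℝ) / 2) := by
  rw [← rpow_natCast]
  exact rpow_le_rpow_of_exponent_ge' hx₀ hx₁ (by norm_num) (by norm_num)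

theorem arcsin_le_add_rpow_three_halves {x : ℝ} (hx₁ : -1 ≤ x) (hx₂ : x ≤ 1) :
    arcsin x ≤ x + 36 * |x| ^ ((3 : ℝ) / 2) := by
  rcases le_or_gt x 0 with hneg | hpos
  · linarith [arcsin_le_self_of_nonpos hx₁ hneg, show 0 ≤ |x| ^ ((3 : ℝ) / 2) by positivity]
  rw [abs_of_pos hpos]
  have hpow := pow_three_le_rpow_three_halves hpos.le hx₂
  rcases le_or_gt x (1 / 2) with hsmall | hlarge
  · linarith [arcsin_le_add_pow_three hpos.le hsmall, pow_pos hpos 3]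
  · have : (1 / 2 : ℝ) ^ 3 ≤ x ^ 3 := by gcongr
    linarith [arcsin_le_pi_div_two x, pi_lt_four]

end Real

theorem arccos_ge_pi_div_two_sub (u : ℝ) (h1 : -1 < u) (h2 : u < 1) :
    Real.arccos u ≥ π / 2 - u - 36 * |u| ^ ((3 : ℝ) / 2) := by
  rw [ge_iff_le, arccos_eq_pi_div_two_sub_arcsin]
  linarith [arcsin_le_add_rpow_three_halves h1.le h2.le]
end

section
/- The function f(u) = u + 36·|u|^(3/2) - π/2 + arccos(u) is nonnegative on (-1, 1), attains the value 0 at u = 0, and u = 0 is its global minimum on (0, (5√13 - 1)/18). -/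
open Real

lemma arcsin_le_key : ∀ u ∈ Set.Ioo (-1 : ℝ) 1,
    Real.arcsin u ≤ u + 36 * |u| ^ ((3 : ℝ) / 2) := by
  intro u ⟨h1, h2⟩
  rcases le_or_gt u 0 with hu | hu
  · -- arcsin u ≤ u for u ≤ 0
    have h0 : 0 ≤ -u := by linarith
    have := Real.sin_le (Real.arcsin_nonneg.2 h0)
    rw [Real.sin_arcsin (by linarith) (by linarith)] at this
    have harc : Real.arcsin u ≤ u := by
      have := Real.arcsin_neg u
      linarith [this, Real.arcsin_neg u]
    have hpos : 0 ≤ 36 * |u| ^ ((3 : ℝ) / 2) := by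
      positivity
    linarith
  · rw [abs_of_pos hu]
    set v := Real.sqrt u with hv
    have hv0 : 0 < v := Real.sqrt_pos.2 hu
    have hv2 : v ^ 2 = u := Real.sq_sqrt hu.le
    have hrw : u ^ ((3 : ℝ) / 2) = v ^ 3 := by
      rw [hv, Real.sqrt_eq_rpow, ← Real.rpow_natCast (u ^ ((1:ℝ)/2)) 3,
        ← Real.rpow_mul hu.le]
      norm_num
    rw [hrw]
    rcases le_or_gt (1/8 : ℝ) u with hcase | hcase
    · -- u ≥ 1/8 : arcsin u ≤ π/2 ≤ u + 36 v^3
      have h1 : Real.arcsin u ≤ π / 2 := Real.arcsin_le_pi_div_two u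
      have hpi : π < 3.15 := Real.pi_lt_d2
      have hvge : (7:ℝ)/20 ≤ v := by nlinarith
      nlinarith [pow_pos hv0 3]
    · -- u < 1/8 : arcsin u < tan (arcsin u) = u / √(1-u²)
      have ha1 : 0 < Real.arcsin u := Real.arcsin_pos.2 hu
      have ha2 : Real.arcsin u < π / 2 := Real.arcsin_lt_pi_div_two.2 h2
      have htan := Real.lt_tan ha1 ha2
      rw [Real.tan_arcsin] at htan
      set w := Real.sqrt (1 - u ^ 2) with hw
      have hw0 : 0 < w := Real.sqrt_pos.2 (by nlinarith)
      have hw2 : w ^ 2 = 1 - u ^ 2 := Real.sq_sqrt (by nlinarith)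
      have hv1 : v < 1 := by nlinarith
      -- key polynomial inequality : (1 - v^4)(1+36v)^2 ≥ 1
      have hpoly : 1 ≤ (w * (1 + 36 * v)) ^ 2 := by nlinarith [pow_pos hv0 3, pow_pos hv0 4, sq_nonneg v, mul_pos hv0 hv0]
      have hkey : 1 ≤ w * (1 + 36 * v) := by nlinarith [mul_pos hw0 (by positivity : (0:ℝ) < 1 + 36 * v)]
      have hdiv : u / w ≤ u + 36 * v ^ 3 := by
        rw [div_le_iff₀ hw0]
        have : u + 36 * v ^ 3 = u * (1 + 36 * v) := by nlinarith
        rw [this]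
        nlinarith
      linarith

theorem f_nonneg_and_min :
    (∀ u ∈ Set.Ioo (-1 : ℝ) 1,
      0 ≤ u + 36 * |u| ^ ((3 : ℝ) / 2) - π / 2 + Real.arccos u) ∧
    ((0 : ℝ) + 36 * |(0 : ℝ)| ^ ((3 : ℝ) / 2) - π / 2 + Real.arccos 0 = 0) ∧
    (∀ u ∈ Set.Ioo (0 : ℝ) ((5 * Real.sqrt 13 - 1) / 18),
      (0 : ℝ) + 36 * |(0 : ℝ)| ^ ((3 : ℝ) / 2) - π / 2 + Real.arccos 0 ≤
        u + 36 * |u| ^ ((3 : ℝ) / 2) - π / 2 + Real.arccos u) := by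
  have hzero : (0 : ℝ) + 36 * |(0 : ℝ)| ^ ((3 : ℝ) / 2) - π / 2 + Real.arccos 0 = 0 := by
    rw [Real.arccos_zero, abs_zero, Real.zero_rpow (by norm_num)]
    ring
  have hmain : ∀ u ∈ Set.Ioo (-1 : ℝ) 1,
      0 ≤ u + 36 * |u| ^ ((3 : ℝ) / 2) - π / 2 + Real.arccos u := by
    intro u hu
    have := arcsin_le_key u hu
    rw [Real.arccos_eq_pi_div_two_sub_arcsin]
    linarith
  refine ⟨hmain, hzero, ?_⟩
  intro u ⟨h1, h2⟩
  have hc : (5 * Real.sqrt 13 - 1) / 18 ≤ 1 := by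
    nlinarith [Real.sq_sqrt (by norm_num : (13:ℝ) ≥ 0), Real.sqrt_nonneg 13]
  rw [hzero]
  exact hmain u ⟨by linarith, by linarith⟩
end

section
/- Let a, b, c > 0 satisfy the hyperbolic triangle inequality constraints with a ≤ c. Then (cosh a · cosh b - cosh c)/(sinh a · sinh b) ≤ tanh(b/2)/tanh(a), and hence this quantity is at most b/(2 tanh a). -/
/-! Since `cosh a ≤ cosh c`, the numerator is at most `cosh a * (cosh b - 1)`, and the half-angle
formula `tanh (b / 2) = (cosh b - 1) / sinh b` identifies the resulting bound with
`tanh (b / 2) / tanh a`. -/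

open Real

lemma monotone_mul_cosh_sub_sinh : Monotone fun x : ℝ => x * cosh x - sinh x := by
  refine monotone_of_hasDerivAt_nonneg
    (fun x => ((hasDerivAt_id x).mul (hasDerivAt_cosh x)).sub (hasDerivAt_sinh x)) fun x => ?_
  have hx : 0 ≤ x * sinh x := by
    rcases le_total 0 x with hx | hx
    · exact mul_nonneg hx (sinh_nonneg_iff.2 hx)
    · exact mul_nonneg_of_nonpos_of_nonpos hx (sinh_nonpos_iff.2 hx)
  simp only [id, Pi.zero_apply]
  linarith

lemma tanh_nonneg {x : ℝ} (hx : 0 ≤ x) : 0 ≤ tanh x := by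
  rw [tanh_eq_sinh_div_cosh]
  exact div_nonneg (sinh_nonneg_iff.2 hx) (cosh_pos x).le

lemma tanh_le_self {x : ℝ} (hx : 0 ≤ x) : tanh x ≤ x := by
  rw [tanh_eq_sinh_div_cosh, div_le_iff₀ (cosh_pos x)]
  simpa using monotone_mul_cosh_sub_sinh hx

lemma tanh_half (x : ℝ) : tanh (x / 2) = (cosh x - 1) / sinh x := by
  obtain ⟨y, rfl⟩ : ∃ y, x = 2 * y := ⟨x / 2, by ring⟩
  rw [mul_div_cancel_left₀ y two_ne_zero, tanh_eq_sinh_div_cosh, cosh_two_mul, sinh_two_mul,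
    cosh_sq]
  rcases eq_or_ne (sinh y) 0 with hy | hy
  · simp [hy]
  · field_simp [(cosh_pos y).ne']
    ring

lemma tanh_half_div_tanh (a b : ℝ) :
    tanh (b / 2) / tanh a = cosh a * (cosh b - 1) / (sinh a * sinh b) := by
  rw [tanh_half, tanh_eq_sinh_div_cosh, div_div_div_eq]
  ring

theorem hyperbolic_cos_angle_bound (a b c : ℝ) (ha : 0 < a) (hb : 0 < b)
    (hac : a ≤ c) :
    (Real.cosh a * Real.cosh b - Real.cosh c) / (Real.sinh a * Real.sinh b) ≤
      Real.tanh (b / 2) / Real.tanh a ∧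
    (Real.cosh a * Real.cosh b - Real.cosh c) / (Real.sinh a * Real.sinh b) ≤
      b / (2 * Real.tanh a) := by
  have hcosh : cosh a ≤ cosh c := by
    rw [cosh_le_cosh, abs_of_pos ha, abs_of_pos (ha.trans_le hac)]
    exact hac
  have hangle : (cosh a * cosh b - cosh c) / (sinh a * sinh b) ≤ tanh (b / 2) / tanh a := by
    rw [tanh_half_div_tanh]
    gcongr
    linarith [mul_sub (cosh a) (cosh b) 1]
  refine ⟨hangle, hangle.trans ?_⟩
  rw [← div_div]
  gcongr
  · exact tanh_nonneg ha.le
  · exact tanh_le_self (by positivity)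
end

section
/- Let 0 < a ≤ c < π/2 and 0 < b < π. Then (cos c - cos a · cos b)/(sin a · sin b) ≤ tan(b/2)/tan(a). -/
open Real

theorem spherical_cos_angle_bound (a b c : ℝ) (ha : 0 < a) (hac : a ≤ c)
    (hc : c < π / 2) (hb0 : 0 < b) (hbπ : b < π) :
    (Real.cos c - Real.cos a * Real.cos b) / (Real.sin a * Real.sin b) ≤
      Real.tan (b / 2) / Real.tan a := by
  have hpi := Real.pi_pos
  have hsa : 0 < Real.sin a := Real.sin_pos_of_pos_of_lt_pi ha (by linarith)
  have hca : 0 < Real.cos a := Real.cos_pos_of_mem_Ioo ⟨by linarith, by linarith⟩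
  have hsb : 0 < Real.sin b := Real.sin_pos_of_pos_of_lt_pi hb0 hbπ
  have hsb2 : 0 < Real.sin (b / 2) := Real.sin_pos_of_pos_of_lt_pi (by linarith) (by linarith)
  have hcb2 : 0 < Real.cos (b / 2) := Real.cos_pos_of_mem_Ioo ⟨by linarith, by linarith⟩
  have hta : 0 < Real.tan a := Real.tan_pos_of_pos_of_lt_pi_div_two ha (by linarith)
  have hcc : Real.cos c ≤ Real.cos a :=
    Real.cos_le_cos_of_nonneg_of_le_pi ha.le (by linarith) hac
  have hsinb : Real.sin b = 2 * Real.sin (b / 2) * Real.cos (b / 2) := by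
    rw [← Real.sin_two_mul]; ring_nf
  have hcosb : Real.cos b = 1 - 2 * Real.sin (b / 2) ^ 2 := by
    have h2 := Real.cos_two_mul (b / 2)
    rw [(by ring : 2 * (b / 2) = b)] at h2
    nlinarith [Real.sin_sq_add_cos_sq (b / 2)]
  rw [div_le_div_iff₀ (by positivity) hta, Real.tan_eq_sin_div_cos,
    Real.tan_eq_sin_div_cos, hsinb, hcosb]
  rw [mul_div_assoc', div_mul_eq_mul_div, div_le_div_iff₀ hca hcb2]
  nlinarith [mul_pos hsa hsb2, mul_pos hsb2 hcb2, sq_nonneg (Real.sin (b/2)),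
    mul_le_mul_of_nonneg_right hcc (by positivity : (0:ℝ) ≤ Real.sin a * Real.sin (b/2) * Real.cos (b/2) * 2),
    mul_pos (mul_pos hsa hca) (mul_pos hsb2 hcb2)]
end

section
/- For every κ < 0 and d > 0, the function ψ(κ, d) := sup over triangles q,p,r in the hyperbolic plane of curvature κ with all sides ≤ d and |pr| ≥ 2||qp|-|qr|| of the ratio |pr|/∠pqr satisfies (2/3)·sn_κ(d) ≤ ψ(κ, d) ≤ 2·sn_κ(d), where sn_κ(t) = sinh(√(-κ)·t)/√(-κ). -/
/-!
Put `s = √(-κ)` and `S = sinh (s d)`. By the law of cosines, `cosh (sℓ) - cosh (s(a - b))` equals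
`sinh (sa) sinh (sb) (1 - cos θ) ≤ S² θ² / 2`, while `|a - b| ≤ ℓ / 2` and `sinh t ≥ t` bound it below by
`3 (sℓ)² / 8`; hence `sℓ ≤ 2 S θ`. For the lower bound, the isosceles hinge with legs `d` and apex angle
`θ` has base `2 arsinh (S sin (θ / 2)) / s`, whose ratio to `θ` tends to `S / s` as `θ → 0⁺`.
-/

open Real Filter Topology

namespace Real

theorem cosh_sub_cosh (x y : ℝ) :
    cosh x - cosh y = 2 * sinh ((x + y) / 2) * sinh ((x - y) / 2) := by
  have hadd := cosh_add ((x + y) / 2) ((x - y) / 2)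
  have hsub := cosh_sub ((x + y) / 2) ((x - y) / 2)
  rw [show (x + y) / 2 + (x - y) / 2 = x by ring] at hadd
  rw [show (x + y) / 2 - (x - y) / 2 = y by ring] at hsub
  linarith

theorem sq_sub_sq_div_two_le_cosh_sub_cosh {x y : ℝ} (h : |y| ≤ x) :
    (x ^ 2 - y ^ 2) / 2 ≤ cosh x - cosh y := by
  rw [← cosh_abs y, cosh_sub_cosh, ← sq_abs y]
  have hy := abs_nonneg y
  have hplus : (x + |y|) / 2 ≤ sinh ((x + |y|) / 2) := self_le_sinh_iff.2 (by linarith)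
  have hminus : (x - |y|) / 2 ≤ sinh ((x - |y|) / 2) := self_le_sinh_iff.2 (by linarith)
  nlinarith [mul_le_mul hplus hminus (by linarith) (by linarith)]

end Real

theorem base_le_two_mul_sinh_mul_angle {A B X L θ : ℝ} (hA : 0 ≤ A) (hB : 0 ≤ B)
    (hAX : A ≤ X) (hBX : B ≤ X) (hθ : 0 ≤ θ) (hAB : 2 * |A - B| ≤ L)
    (hcos : cosh L = cosh A * cosh B - sinh A * sinh B * cos θ) :
    L ≤ 2 * sinh X * θ := by
  have hL : 0 ≤ L := le_trans (by positivity) hAB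
  have hgap : cosh L - cosh (A - B) = sinh A * sinh B * (1 - cos θ) := by
    rw [hcos, cosh_sub]; ring
  have hX : 0 ≤ sinh X := sinh_nonneg_iff.2 (hA.trans hAX)
  have hupper : sinh A * sinh B * (1 - cos θ) ≤ sinh X * sinh X * (θ ^ 2 / 2) := by
    have : 0 ≤ sinh A := sinh_nonneg_iff.2 hA
    have : 0 ≤ sinh B := sinh_nonneg_iff.2 hB
    have : 0 ≤ 1 - cos θ := by linarith [cos_le_one θ]
    have : sinh A ≤ sinh X := sinh_le_sinh.2 hAX
    have : sinh B ≤ sinh X := sinh_le_sinh.2 hBX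
    have : 1 - cos θ ≤ θ ^ 2 / 2 := by linarith [one_sub_sq_div_two_le_cos (x := θ)]
    gcongr
  have hlower : 3 / 8 * L ^ 2 ≤ cosh L - cosh (A - B) := by
    have := sq_sub_sq_div_two_le_cosh_sub_cosh (x := L) (y := A - B) (by linarith [abs_nonneg (A - B)])
    nlinarith [sq_abs (A - B), abs_nonneg (A - B)]
  refine (pow_le_pow_iff_left₀ hL (by positivity) two_ne_zero).1 ?_
  nlinarith [sq_nonneg (sinh X * θ)]

/-- The ratios `|pr| / ∠pqr` whose supremum is `ψ(-s², d)`: `a = |qp|`, `b = |qr|`, `θ = ∠pqr`,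
and `ℓ = |pr|` is given by the law of cosines in curvature `-s²`. -/
def hingeRatios (s d : ℝ) : Set ℝ :=
  {z | ∃ a b θ ℓ : ℝ, 0 < a ∧ 0 < b ∧ 0 < ℓ ∧ 0 < θ ∧ θ ≤ π ∧
    a ≤ d ∧ b ≤ d ∧ ℓ ≤ d ∧ 2 * |a - b| ≤ ℓ ∧
    cosh (s * ℓ) = cosh (s * a) * cosh (s * b) - sinh (s * a) * sinh (s * b) * cos θ ∧
    z = ℓ / θ}

theorem le_two_mul_sinh_div_of_mem_hingeRatios {s d z : ℝ} (hs : 0 < s)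
    (hz : z ∈ hingeRatios s d) : z ≤ 2 * (sinh (s * d) / s) := by
  obtain ⟨a, b, θ, ℓ, ha, hb, -, hθ, -, had, hbd, -, hab, hcos, rfl⟩ := hz
  have hsab : 2 * |s * a - s * b| ≤ s * ℓ := by
    rw [← mul_sub, abs_mul, abs_of_pos hs, mul_left_comm]
    exact mul_le_mul_of_nonneg_left hab hs.le
  have hbase := base_le_two_mul_sinh_mul_angle (mul_pos hs ha).le (mul_pos hs hb).le
    (mul_le_mul_of_nonneg_left had hs.le) (mul_le_mul_of_nonneg_left hbd hs.le) hθ.le hsab hcos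
  rw [div_le_iff₀ hθ]
  calc ℓ = s * ℓ / s := by field_simp
    _ ≤ 2 * sinh (s * d) * θ / s := by gcongr
    _ = 2 * (sinh (s * d) / s) * θ := by ring

noncomputable def isoscelesBase (s d θ : ℝ) : ℝ := 2 * arsinh (sinh (s * d) * sin (θ / 2)) / s

theorem cosh_two_mul_arsinh_sinh_mul_sin_half (x θ : ℝ) :
    cosh (2 * arsinh (sinh x * sin (θ / 2))) = cosh x * cosh x - sinh x * sinh x * cos θ := by
  have hcos : cos θ = 1 - 2 * sin (θ / 2) ^ 2 := by
    rw [← cos_two_mul_eq_one_sub, mul_div_cancel₀ θ two_ne_zero]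
  rw [cosh_two_mul, cosh_sq', sinh_arsinh, hcos]
  linear_combination -cosh_sq x

theorem hasDerivAt_two_mul_arsinh_mul_sin_half (c : ℝ) :
    HasDerivAt (fun θ => 2 * arsinh (c * sin (θ / 2))) c 0 := by
  refine ((((hasDerivAt_id (0 : ℝ)).div_const 2).sin.const_mul c).arsinh.const_mul 2).congr_deriv ?_
  norm_num
  ring

theorem tendsto_isoscelesBase_div (s d : ℝ) :
    Tendsto (fun θ => isoscelesBase s d θ / θ) (𝓝[>] 0) (𝓝 (sinh (s * d) / s)) := by
  refine ((hasDerivAt_two_mul_arsinh_mul_sin_half _).tendsto_slope_zero_right.div_const s).congr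
    fun θ => ?_
  simp only [isoscelesBase, zero_add, zero_div, sin_zero, mul_zero, arsinh_zero, sub_zero, smul_eq_mul]
  ring

theorem eventually_isoscelesBase_div_mem_hingeRatios {s d : ℝ} (hs : 0 < s) (hd : 0 < d) :
    ∀ᶠ θ in 𝓝[>] 0, isoscelesBase s d θ / θ ∈ hingeRatios s d := by
  have hsmall : ∀ᶠ θ in 𝓝[>] 0, 2 * arsinh (sinh (s * d) * sin (θ / 2)) < s * d := by
    refine nhdsWithin_le_nhds ((hasDerivAt_two_mul_arsinh_mul_sin_half _).continuousAt.eventually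
      (gt_mem_nhds ?_))
    simpa using mul_pos hs hd
  filter_upwards [hsmall, Ioo_mem_nhdsGT pi_pos] with θ hθd ⟨hθ, hθπ⟩
  have hsin : 0 < sin (θ / 2) := sin_pos_of_pos_of_lt_pi (by linarith) (by linarith)
  have hℓ : 0 < isoscelesBase s d θ :=
    div_pos (mul_pos two_pos (arsinh_pos_iff.2 (mul_pos (sinh_pos_iff.2 (mul_pos hs hd)) hsin))) hs
  refine ⟨d, d, θ, isoscelesBase s d θ, hd, hd, hℓ, hθ, hθπ.le, le_rfl, le_rfl, ?_, ?_, ?_, rfl⟩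
  · rw [isoscelesBase, div_le_iff₀ hs, mul_comm d]
    exact hθd.le
  · simpa using hℓ.le
  · rw [isoscelesBase, mul_div_cancel₀ _ hs.ne']
    exact cosh_two_mul_arsinh_sinh_mul_sin_half _ _

theorem sinh_mul_div_le_sSup_hingeRatios {s d : ℝ} (hs : 0 < s) (hd : 0 < d) :
    sinh (s * d) / s ≤ sSup (hingeRatios s d) :=
  le_of_tendsto (tendsto_isoscelesBase_div s d)
    ((eventually_isoscelesBase_div_mem_hingeRatios hs hd).mono fun _ hθ =>
      le_csSup ⟨_, fun _ hz => le_two_mul_sinh_div_of_mem_hingeRatios hs hz⟩ hθ)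

theorem psi_bounds (κ d : ℝ) (hκ : κ < 0) (hd : 0 < d) :
    (2 / 3) * (Real.sinh (Real.sqrt (-κ) * d) / Real.sqrt (-κ)) ≤
      sSup {z : ℝ | ∃ a b θ ℓ : ℝ, 0 < a ∧ 0 < b ∧ 0 < ℓ ∧ 0 < θ ∧ θ ≤ π ∧
        a ≤ d ∧ b ≤ d ∧ ℓ ≤ d ∧ 2 * |a - b| ≤ ℓ ∧
        Real.cosh (Real.sqrt (-κ) * ℓ) =
          Real.cosh (Real.sqrt (-κ) * a) * Real.cosh (Real.sqrt (-κ) * b) -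
            Real.sinh (Real.sqrt (-κ) * a) * Real.sinh (Real.sqrt (-κ) * b) *
              Real.cos θ ∧
        z = ℓ / θ} ∧
    sSup {z : ℝ | ∃ a b θ ℓ : ℝ, 0 < a ∧ 0 < b ∧ 0 < ℓ ∧ 0 < θ ∧ θ ≤ π ∧
        a ≤ d ∧ b ≤ d ∧ ℓ ≤ d ∧ 2 * |a - b| ≤ ℓ ∧
        Real.cosh (Real.sqrt (-κ) * ℓ) =
          Real.cosh (Real.sqrt (-κ) * a) * Real.cosh (Real.sqrt (-κ) * b) -
            Real.sinh (Real.sqrt (-κ) * a) * Real.sinh (Real.sqrt (-κ) * b) *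
              Real.cos θ ∧
        z = ℓ / θ} ≤ 2 * (Real.sinh (Real.sqrt (-κ) * d) / Real.sqrt (-κ)) := by
  have hs : 0 < √(-κ) := sqrt_pos.2 (neg_pos.2 hκ)
  change _ ≤ sSup (hingeRatios √(-κ) d) ∧ sSup (hingeRatios √(-κ) d) ≤ _
  have hsn : 0 < sinh (√(-κ) * d) / √(-κ) := div_pos (sinh_pos_iff.2 (mul_pos hs hd)) hs
  obtain ⟨θ, hθ⟩ := (eventually_isoscelesBase_div_mem_hingeRatios hs hd).exists
  constructor
  · calc 2 / 3 * (sinh (√(-κ) * d) / √(-κ)) ≤ sinh (√(-κ) * d) / √(-κ) := by linarith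
      _ ≤ sSup (hingeRatios √(-κ) d) := sinh_mul_div_le_sSup_hingeRatios hs hd
  · exact csSup_le ⟨_, hθ⟩ fun _ hz => le_two_mul_sinh_div_of_mem_hingeRatios hs hz
end
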